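/- arXiv:2603.05814 — 2 statements merged into one kernel-verified Lean document; each statement's English description precedes it below -/
import Mathlib

section
/- (Zoutendijk condition) Assume Assumptions A1 and A2 hold for the initial point x⁰. Consider iterates x^{k+1} = x^k + t_k d^k for k ≥ 0, where each d^k ∈ ℝⁿ satisfies ψ_{x^k}(d^k) < 0 and each t_k > 0 satisfies the standard Wolfe conditions at x^k along d^k. Then Σ_{k≥0} [ψ_{x^k}(d^k)]² / ‖d^k‖² < +∞. -/
open scoped BigOperators

noncomputable def pd (n : ℕ) (F : EuclideanSpace ℝ (Fin n) → ℝ)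
    (x : EuclideanSpace ℝ (Fin n)) (j : Fin n) : ℝ :=
  fderiv ℝ F x (EuclideanSpace.single j (1 : ℝ))

noncomputable def glo (n : ℕ) (F H : EuclideanSpace ℝ (Fin n) → ℝ)
    (x : EuclideanSpace ℝ (Fin n)) (j : Fin n) : ℝ :=
  min (pd n F x j) (pd n H x j)

noncomputable def ghi (n : ℕ) (F H : EuclideanSpace ℝ (Fin n) → ℝ)
    (x : EuclideanSpace ℝ (Fin n)) (j : Fin n) : ℝ :=
  max (pd n F x j) (pd n H x j)

noncomputable def gloVec (n : ℕ) (F H : EuclideanSpace ℝ (Fin n) → ℝ)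
    (x : EuclideanSpace ℝ (Fin n)) : EuclideanSpace ℝ (Fin n) :=
  WithLp.toLp 2 (fun j => glo n F H x j)

noncomputable def ghiVec (n : ℕ) (F H : EuclideanSpace ℝ (Fin n) → ℝ)
    (x : EuclideanSpace ℝ (Fin n)) : EuclideanSpace ℝ (Fin n) :=
  WithLp.toLp 2 (fun j => ghi n F H x j)

noncomputable def psi (m n : ℕ) (Gl Gu : Fin m → EuclideanSpace ℝ (Fin n) → ℝ)
    (x v : EuclideanSpace ℝ (Fin n)) : ℝ :=
  ⨆ i : Fin m, (1 / 2 : ℝ) *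
    ((∑ j : Fin n, (glo n (Gl i) (Gu i) x j + ghi n (Gl i) (Gu i) x j) * v j) +
     (∑ j : Fin n, (ghi n (Gl i) (Gu i) x j - glo n (Gl i) (Gu i) x j) * |v j|))

def LevelSet (m n : ℕ) (Gl Gu : Fin m → EuclideanSpace ℝ (Fin n) → ℝ)
    (x0 : EuclideanSpace ℝ (Fin n)) : Set (EuclideanSpace ℝ (Fin n)) :=
  {x | ∀ i : Fin m, Gl i x ≤ Gl i x0 ∧ Gu i x ≤ Gu i x0}

def StdWolfe (m n : ℕ) (Gl Gu : Fin m → EuclideanSpace ℝ (Fin n) → ℝ)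
    (ρ σ : ℝ) (x d : EuclideanSpace ℝ (Fin n)) (t : ℝ) : Prop :=
  (∀ i : Fin m,
      Gl i (x + t • d) ≤ Gl i x + ρ * t * psi m n Gl Gu x d ∧
      Gu i (x + t • d) ≤ Gu i x + ρ * t * psi m n Gl Gu x d) ∧
  σ * psi m n Gl Gu x d ≤ psi m n Gl Gu (x + t • d) d

def StrongWolfe (m n : ℕ) (Gl Gu : Fin m → EuclideanSpace ℝ (Fin n) → ℝ)
    (ρ σ : ℝ) (x d : EuclideanSpace ℝ (Fin n)) (t : ℝ) : Prop :=
  (∀ i : Fin m,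
      Gl i (x + t • d) ≤ Gl i x + ρ * t * psi m n Gl Gu x d ∧
      Gu i (x + t • d) ≤ Gu i x + ρ * t * psi m n Gl Gu x d) ∧
  |psi m n Gl Gu (x + t • d) d| ≤ σ * |psi m n Gl Gu x d|

def AssumptionA1 (m n : ℕ) (Gl Gu : Fin m → EuclideanSpace ℝ (Fin n) → ℝ)
    (x0 : EuclideanSpace ℝ (Fin n)) : Prop :=
  ∀ i : Fin m, ∃ L : ℝ, 0 < L ∧
    ∀ y ∈ LevelSet m n Gl Gu x0, ∀ z ∈ LevelSet m n Gl Gu x0,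
      ‖gloVec n (Gl i) (Gu i) y - gloVec n (Gl i) (Gu i) z‖ ≤ L * ‖y - z‖ ∧
      ‖ghiVec n (Gl i) (Gu i) y - ghiVec n (Gl i) (Gu i) z‖ ≤ L * ‖y - z‖

def AssumptionA2 (m n : ℕ) (Gl Gu : Fin m → EuclideanSpace ℝ (Fin n) → ℝ)
    (x0 : EuclideanSpace ℝ (Fin n)) : Prop :=
  ∀ y : ℕ → EuclideanSpace ℝ (Fin n),
    (∀ k, y k ∈ LevelSet m n Gl Gu x0) →
    (∀ (i : Fin m) (k : ℕ), Gl i (y (k+1)) ≤ Gl i (y k) ∧ Gu i (y (k+1)) ≤ Gu i (y k)) →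
    ∀ i : Fin m, (∃ Cl : ℝ, ∀ k, Cl ≤ Gl i (y k)) ∧ (∃ Cu : ℝ, ∀ k, Cu ≤ Gu i (y k))

/-!
The Armijo part of the Wolfe conditions makes every endpoint function decrease by at least
`ρ tₖ |ψₖ|` along the iteration, so the iterates stay in `L₀` and, by A2, `∑ tₖ |ψₖ| < ∞`.
The curvature part together with A1 (which makes `x ↦ ψ_x(v)` Lipschitz on `L₀` with constant
proportional to `‖v‖`) gives the lower bound `tₖ ≥ (1 - σ) |ψₖ| / (Λ ‖dₖ‖²)`, and hence
`ψₖ² / ‖dₖ‖² ≤ Λ / (1 - σ) · tₖ |ψₖ|`.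
-/

open scoped RealInnerProductSpace

section IntervalForm

variable {ι : Type*} [Fintype ι]

noncomputable def absVec (v : EuclideanSpace ℝ ι) : EuclideanSpace ℝ ι :=
  WithLp.toLp 2 fun j => |v j|

lemma norm_absVec (v : EuclideanSpace ℝ ι) : ‖absVec v‖ = ‖v‖ := by
  simp only [EuclideanSpace.norm_eq, absVec, Real.norm_eq_abs, abs_abs]

/-- The support function `v ↦ max_{g ∈ [a, b]} ⟪g, v⟫` of the box `[a, b] ⊆ ℝⁿ` (when `a ≤ b`). -/
noncomputable def intervalForm (a b v : EuclideanSpace ℝ ι) : ℝ :=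
  (1 / 2) * (⟪a + b, v⟫ + ⟪b - a, absVec v⟫)

lemma intervalForm_sub (a b A B v : EuclideanSpace ℝ ι) :
    intervalForm a b v - intervalForm A B v = intervalForm (a - A) (b - B) v := by
  simp only [intervalForm, inner_add_left, inner_sub_left]
  ring

lemma intervalForm_le (a b v : EuclideanSpace ℝ ι) :
    intervalForm a b v ≤ (‖a‖ + ‖b‖) * ‖v‖ := by
  have h₁ : ⟪a + b, v⟫ ≤ (‖a‖ + ‖b‖) * ‖v‖ :=
    (real_inner_le_norm _ _).trans (by gcongr; exact norm_add_le a b)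
  have h₂ : ⟪b - a, absVec v⟫ ≤ (‖a‖ + ‖b‖) * ‖v‖ := by
    refine (real_inner_le_norm _ _).trans ?_
    rw [norm_absVec, add_comm ‖a‖]
    gcongr
    exact norm_sub_le b a
  rw [intervalForm]
  linarith

end IntervalForm

section Scalarization

variable {m n : ℕ} {Gl Gu : Fin m → EuclideanSpace ℝ (Fin n) → ℝ}

lemma psi_eq_iSup_intervalForm (x v : EuclideanSpace ℝ (Fin n)) :
    psi m n Gl Gu x v =
      ⨆ i, intervalForm (gloVec n (Gl i) (Gu i) x) (ghiVec n (Gl i) (Gu i) x) v := by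
  simp only [psi, intervalForm, PiLp.inner_apply, absVec, gloVec, ghiVec, PiLp.add_apply,
    PiLp.sub_apply, RCLike.inner_apply, conj_trivial, mul_comm]

lemma psi_zero (x : EuclideanSpace ℝ (Fin n)) : psi m n Gl Gu x 0 = 0 := by
  simp [psi]

lemma psi_le_psi_add (hm : 0 < m) {x y : EuclideanSpace ℝ (Fin n)} {C : ℝ}
    (h : ∀ i, ‖gloVec n (Gl i) (Gu i) x - gloVec n (Gl i) (Gu i) y‖ +
      ‖ghiVec n (Gl i) (Gu i) x - ghiVec n (Gl i) (Gu i) y‖ ≤ C)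
    (v : EuclideanSpace ℝ (Fin n)) :
    psi m n Gl Gu x v ≤ psi m n Gl Gu y v + C * ‖v‖ := by
  have : Nonempty (Fin m) := Fin.pos_iff_nonempty.mp hm
  rw [psi_eq_iSup_intervalForm, psi_eq_iSup_intervalForm]
  refine ciSup_le fun i => ?_
  have hi := (intervalForm_le _ _ v).trans (mul_le_mul_of_nonneg_right (h i) (norm_nonneg v))
  rw [← intervalForm_sub] at hi
  linarith [le_ciSup (Set.finite_range fun i =>
    intervalForm (gloVec n (Gl i) (Gu i) y) (ghiVec n (Gl i) (Gu i) y) v).bddAbove i]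

lemma AssumptionA1.exists_psi_le_add (hm : 0 < m) {x0 : EuclideanSpace ℝ (Fin n)}
    (hA1 : AssumptionA1 m n Gl Gu x0) :
    ∃ Λ : ℝ, ∀ y ∈ LevelSet m n Gl Gu x0, ∀ z ∈ LevelSet m n Gl Gu x0,
      ∀ v, psi m n Gl Gu y v ≤ psi m n Gl Gu z v + Λ * ‖y - z‖ * ‖v‖ := by
  choose L hLpos hL using hA1
  have hLle : ∀ i, L i ≤ ∑ j, L j := fun i =>
    Finset.single_le_sum (fun j _ => (hLpos j).le) (Finset.mem_univ i)
  refine ⟨2 * ∑ j, L j, fun y hy z hz v => psi_le_psi_add hm (fun i => ?_) v⟩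
  have hLi : L i * ‖y - z‖ ≤ (∑ j, L j) * ‖y - z‖ :=
    mul_le_mul_of_nonneg_right (hLle i) (norm_nonneg _)
  linarith [(hL i y hy z hz).1, (hL i y hy z hz).2]

end Scalarization

section Wolfe

variable {m n : ℕ} {Gl Gu : Fin m → EuclideanSpace ℝ (Fin n) → ℝ} {ρ σ : ℝ}
  {x d : EuclideanSpace ℝ (Fin n)} {t : ℝ}

lemma StdWolfe.apply_add_smul_le (hW : StdWolfe m n Gl Gu ρ σ x d t) (hρ : 0 ≤ ρ) (ht : 0 ≤ t)
    (hd : psi m n Gl Gu x d ≤ 0) (i : Fin m) :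
    Gl i (x + t • d) ≤ Gl i x ∧ Gu i (x + t • d) ≤ Gu i x := by
  have h : ρ * t * psi m n Gl Gu x d ≤ 0 := mul_nonpos_of_nonneg_of_nonpos (by positivity) hd
  exact ⟨(hW.1 i).1.trans (by linarith), (hW.1 i).2.trans (by linarith)⟩

lemma StdWolfe.neg_psi_le (hW : StdWolfe m n Gl Gu ρ σ x d t) (ht : 0 ≤ t) {Λ : ℝ}
    (hΛ : psi m n Gl Gu (x + t • d) d ≤ psi m n Gl Gu x d + Λ * ‖x + t • d - x‖ * ‖d‖) :
    (1 - σ) * -psi m n Gl Gu x d ≤ Λ * t * ‖d‖ ^ 2 := by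
  rw [add_sub_cancel_left, norm_smul, Real.norm_of_nonneg ht] at hΛ
  linarith [hW.2]

end Wolfe

lemma mem_levelSet_of_forall_le_succ {m n : ℕ} {Gl Gu : Fin m → EuclideanSpace ℝ (Fin n) → ℝ}
    {y : ℕ → EuclideanSpace ℝ (Fin n)}
    (h : ∀ (i : Fin m) (k : ℕ), Gl i (y (k + 1)) ≤ Gl i (y k) ∧ Gu i (y (k + 1)) ≤ Gu i (y k))
    (k : ℕ) : y k ∈ LevelSet m n Gl Gu (y 0) := by
  induction k with
  | zero => exact fun i => ⟨le_rfl, le_rfl⟩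
  | succ k ih => exact fun i => ⟨(h i k).1.trans (ih i).1, (h i k).2.trans (ih i).2⟩

lemma summable_of_le_sub_succ {a f : ℕ → ℝ} {C : ℝ} (ha : ∀ k, 0 ≤ a k)
    (hf : ∀ k, a k ≤ f k - f (k + 1)) (hC : ∀ k, C ≤ f k) : Summable a := by
  refine summable_of_sum_range_le (c := f 0 - C) ha fun N => ?_
  calc ∑ k ∈ Finset.range N, a k ≤ ∑ k ∈ Finset.range N, (f k - f (k + 1)) :=
        Finset.sum_le_sum fun k _ => hf k
    _ = f 0 - f N := Finset.sum_range_sub' f N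
    _ ≤ f 0 - C := by linarith [hC N]

lemma sq_div_le_of_mul_le {φ D c K t : ℝ} (hφ : 0 ≤ φ) (hD : 0 < D) (hc : 0 < c)
    (h : c * φ ≤ K * t * D) : φ ^ 2 / D ≤ K / c * (t * φ) := by
  rw [div_le_iff₀ hD, div_mul_eq_mul_div, div_mul_eq_mul_div, le_div_iff₀ hc]
  nlinarith [mul_le_mul_of_nonneg_right h hφ]

theorem zoutendijk_general (m n : ℕ) (hm : 0 < m)
    (Gl Gu : Fin m → EuclideanSpace ℝ (Fin n) → ℝ)
    (ρ σ : ℝ) (hρ : 0 < ρ) (hσ : σ < 1)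
    (x d : ℕ → EuclideanSpace ℝ (Fin n)) (t : ℕ → ℝ)
    (hx : ∀ k : ℕ, x (k+1) = x k + t k • d k)
    (hdesc : ∀ k : ℕ, psi m n Gl Gu (x k) (d k) < 0)
    (ht : ∀ k : ℕ, 0 < t k ∧ StdWolfe m n Gl Gu ρ σ (x k) (d k) (t k))
    (hA1 : AssumptionA1 m n Gl Gu (x 0))
    (hA2 : AssumptionA2 m n Gl Gu (x 0)) :
    Summable (fun k : ℕ => (psi m n Gl Gu (x k) (d k))^2 / ‖d k‖^2) := by
  have hstep : ∀ i k, Gl i (x (k + 1)) ≤ Gl i (x k) ∧ Gu i (x (k + 1)) ≤ Gu i (x k) :=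
    fun i k => hx k ▸ (ht k).2.apply_add_smul_le hρ.le (ht k).1.le (hdesc k).le i
  have hL₀ := mem_levelSet_of_forall_le_succ hstep
  obtain ⟨⟨C, hC⟩, -⟩ := hA2 x hL₀ hstep ⟨0, hm⟩
  have hsum : Summable fun k => ρ * (t k * -psi m n Gl Gu (x k) (d k)) := by
    refine summable_of_le_sub_succ (fun k => ?_) (fun k => ?_) hC
    · exact mul_nonneg hρ.le (mul_nonneg (ht k).1.le (neg_nonneg.2 (hdesc k).le))
    · linarith [hx k ▸ ((ht k).2.1 ⟨0, hm⟩).1]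
  obtain ⟨Λ, hΛ⟩ := hA1.exists_psi_le_add hm
  have hcurv : ∀ k, (1 - σ) * -psi m n Gl Gu (x k) (d k) ≤ Λ * t k * ‖d k‖ ^ 2 :=
    fun k => (ht k).2.neg_psi_le (ht k).1.le (hx k ▸ hΛ _ (hL₀ (k + 1)) _ (hL₀ k) (d k))
  have hd : ∀ k, d k ≠ 0 := fun k hd0 => (hdesc k).ne (by rw [hd0, psi_zero])
  refine Summable.of_nonneg_of_le (fun k => by positivity) (fun k => ?_)
    (((summable_mul_left_iff hρ.ne').mp hsum).mul_left (Λ / (1 - σ)))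
  rw [← neg_sq]
  exact sq_div_le_of_mul_le (neg_nonneg.2 (hdesc k).le)
    (pow_pos (norm_pos_iff.2 (hd k)) 2) (sub_pos.2 hσ) (hcurv k)

theorem zoutendijk (m n : ℕ) (hm : 0 < m) (hn : 0 < n)
    (Gl Gu : Fin m → EuclideanSpace ℝ (Fin n) → ℝ)
    (hGl : ∀ i, ContDiff ℝ 1 (Gl i)) (hGu : ∀ i, ContDiff ℝ 1 (Gu i))
    (hle : ∀ (i : Fin m) (x : EuclideanSpace ℝ (Fin n)), Gl i x ≤ Gu i x)
    (ρ σ : ℝ) (hρ : 0 < ρ) (hρσ : ρ < σ) (hσ : σ < 1)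
    (x d : ℕ → EuclideanSpace ℝ (Fin n)) (t : ℕ → ℝ)
    (hx : ∀ k : ℕ, x (k+1) = x k + t k • d k)
    (hdesc : ∀ k : ℕ, psi m n Gl Gu (x k) (d k) < 0)
    (ht : ∀ k : ℕ, 0 < t k ∧ StdWolfe m n Gl Gu ρ σ (x k) (d k) (t k))
    (hA1 : AssumptionA1 m n Gl Gu (x 0))
    (hA2 : AssumptionA2 m n Gl Gu (x 0)) :
    Summable (fun k : ℕ => (psi m n Gl Gu (x k) (d k))^2 / ‖d k‖^2) :=
  zoutendijk_general m n hm Gl Gu ρ σ hρ hσ x d t hx hdesc ht hA1 hA2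
end

section
/- For all x, y, d ∈ ℝⁿ, the scalarization satisfies the estimate ψ_y(d) − ψ_x(d) ≤ max_{1≤i≤m} ( ‖g̲_i(y) − g̲_i(x)‖ + ‖g̅_i(y) − g̅_i(x)‖ )·‖d‖, where ‖·‖ is the Euclidean norm. -/
open scoped BigOperators

/-! The `i`-th term of `ψ_x(v)` is the support function `max {gᵀv | g̲ ≤ g ≤ g̅}` of the box of
gradients, i.e. `g̲ᵀv⁻ + g̅ᵀv⁺` with `v⁻ = min(v, 0)` and `v⁺ = max(v, 0)`. It is therefore linear
in the endpoints, and Cauchy–Schwarz with `‖v^±‖ ≤ ‖v‖` bounds its change by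
`(‖Δg̲‖ + ‖Δg̅‖) ‖v‖`. A maximum of finitely many functions changes by at most the largest of
their changes. -/

theorem Real.iSup_add_le_of_finite {ι : Type*} [Finite ι] (f g : ι → ℝ) :
    ⨆ j, (f j + g j) ≤ (⨆ j, f j) + ⨆ j, g j := by
  cases isEmpty_or_nonempty ι
  · simp
  · exact ciSup_le fun j => add_le_add (le_ciSup (Set.finite_range f).bddAbove j)
      (le_ciSup (Set.finite_range g).bddAbove j)

section

variable {ι : Type*} [Fintype ι]

theorem EuclideanSpace.sum_mul_le_norm_mul_norm_of_abs_le (a v : EuclideanSpace ℝ ι)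
    {u : ι → ℝ} (hu : ∀ j, |u j| ≤ |v j|) : ∑ j, a j * u j ≤ ‖a‖ * ‖v‖ := by
  calc ∑ j, a j * u j ≤ √(∑ j, a j ^ 2) * √(∑ j, u j ^ 2) :=
        Real.sum_mul_le_sqrt_mul_sqrt _ _ _
    _ ≤ √(∑ j, a j ^ 2) * √(∑ j, v j ^ 2) := by
        gcongr √(∑ j, a j ^ 2) * √?_
        exact Finset.sum_le_sum fun j _ => sq_le_sq.mpr (hu j)
    _ = ‖a‖ * ‖v‖ := by simp only [EuclideanSpace.norm_eq, Real.norm_eq_abs, sq_abs]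

noncomputable def boxSupport (l h v : EuclideanSpace ℝ ι) : ℝ :=
  (1 / 2 : ℝ) * ((∑ j, (l j + h j) * v j) + ∑ j, (h j - l j) * |v j|)

theorem boxSupport_eq_sum_min_add_sum_max (l h v : EuclideanSpace ℝ ι) :
    boxSupport l h v = ∑ j, l j * min (v j) 0 + ∑ j, h j * max (v j) 0 := by
  simp only [boxSupport, Finset.mul_sum, ← Finset.sum_add_distrib]
  refine Finset.sum_congr rfl fun j _ => ?_
  rcases le_total (v j) 0 with hv | hv
  · rw [abs_of_nonpos hv, min_eq_left hv, max_eq_right hv]; ring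
  · rw [abs_of_nonneg hv, min_eq_right hv, max_eq_left hv]; ring

theorem boxSupport_sub_boxSupport_le (l h l' h' v : EuclideanSpace ℝ ι) :
    boxSupport l h v - boxSupport l' h' v ≤ (‖l - l'‖ + ‖h - h'‖) * ‖v‖ := by
  have hmin : ∑ j, (l - l') j * min (v j) 0 ≤ ‖l - l'‖ * ‖v‖ :=
    (l - l').sum_mul_le_norm_mul_norm_of_abs_le v fun j =>
      abs_min_le_max_abs_abs.trans (by simp)
  have hmax : ∑ j, (h - h') j * max (v j) 0 ≤ ‖h - h'‖ * ‖v‖ :=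
    (h - h').sum_mul_le_norm_mul_norm_of_abs_le v fun j =>
      abs_max_le_max_abs_abs.trans (by simp)
  have hdiff : boxSupport l h v - boxSupport l' h' v =
      ∑ j, (l - l') j * min (v j) 0 + ∑ j, (h - h') j * max (v j) 0 := by
    simp only [boxSupport_eq_sum_min_add_sum_max, PiLp.sub_apply, sub_mul, Finset.sum_sub_distrib]
    ring
  rw [hdiff, add_mul]
  exact add_le_add hmin hmax

end

theorem psi_eq_iSup_boxSupport (m n : ℕ) (Gl Gu : Fin m → EuclideanSpace ℝ (Fin n) → ℝ)
    (x v : EuclideanSpace ℝ (Fin n)) :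
    psi m n Gl Gu x v = ⨆ i, boxSupport (gloVec n (Gl i) (Gu i) x) (ghiVec n (Gl i) (Gu i) x) v :=
  rfl

theorem psi_diff_bound_general (m n : ℕ)
    (Gl Gu : Fin m → EuclideanSpace ℝ (Fin n) → ℝ)
    (x y d : EuclideanSpace ℝ (Fin n)) :
    psi m n Gl Gu y d - psi m n Gl Gu x d ≤
      (⨆ i : Fin m,
        (‖gloVec n (Gl i) (Gu i) y - gloVec n (Gl i) (Gu i) x‖ +
         ‖ghiVec n (Gl i) (Gu i) y - ghiVec n (Gl i) (Gu i) x‖)) * ‖d‖ := by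
  rw [Real.iSup_mul_of_nonneg (norm_nonneg d), sub_le_iff_le_add', psi_eq_iSup_boxSupport,
    psi_eq_iSup_boxSupport]
  refine (ciSup_mono (Set.finite_range _).bddAbove fun i => ?_).trans
    (Real.iSup_add_le_of_finite _ _)
  exact sub_le_iff_le_add'.mp (boxSupport_sub_boxSupport_le _ _ _ _ d)

theorem psi_diff_bound (m n : ℕ) (hm : 0 < m) (hn : 0 < n)
    (Gl Gu : Fin m → EuclideanSpace ℝ (Fin n) → ℝ)
    (hGl : ∀ i, ContDiff ℝ 1 (Gl i)) (hGu : ∀ i, ContDiff ℝ 1 (Gu i))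
    (hle : ∀ (i : Fin m) (x : EuclideanSpace ℝ (Fin n)), Gl i x ≤ Gu i x)
    (x y d : EuclideanSpace ℝ (Fin n)) :
    psi m n Gl Gu y d - psi m n Gl Gu x d ≤
      (⨆ i : Fin m,
        (‖gloVec n (Gl i) (Gu i) y - gloVec n (Gl i) (Gu i) x‖ +
         ‖ghiVec n (Gl i) (Gu i) y - ghiVec n (Gl i) (Gu i) x‖)) * ‖d‖ :=
  psi_diff_bound_general m n Gl Gu x y d
end
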